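/- Let P be a feedback family and Q a forward family with I(←P, →Q) < ∞, and write Π := ←P⊗ν_{0,n}. Then for every reversed pair (S, R) such that ←S⊗→R ≪ Π and ←P⊗→Q ≪ ←S⊗→R, one has ∫ log( d(←S⊗→R)/dΠ ) d(←P⊗→Q) ≤ I(←P, →Q), with equality if and only if ←S⊗→R = ←P⊗→Q. Consequently, I(←P, →Q) = sup over all such reversed pairs (S, R) of ∫ log( d(←S⊗→R)/dΠ ) d(←P⊗→Q), and the supremum is attained (on Polish spaces the joint ←P⊗→Q itself admits a reversed-pair factorization by successive disintegration in the order y_0, x_0, y_1, x_1, …). -/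

import Mathlib

open MeasureTheory ProbabilityTheory Filter
open scoped ENNReal NNReal

namespace PaperDI

lemma measurable_finSnoc {Z : ℕ → Type*} [∀ i, MeasurableSpace (Z i)] (k : ℕ) :
    Measurable (fun p : (∀ j : Fin k, Z j) × Z k =>
      (Fin.snoc p.1 p.2 : ∀ j : Fin (k + 1), Z j)) := by
  apply measurable_pi_lambda
  intro j
  induction j using Fin.lastCases with
  | last => simpa using measurable_snd
  | cast i =>
    first
    | (simp only [Fin.snoc_castSucc]; exact (measurable_pi_apply i).comp measurable_fst)
    | (simp; exact (measurable_pi_apply i).comp measurable_fst)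

/-- Restriction of a prefix of length `k+1` to the prefix of length `k`. -/
def restr {Z : ℕ → Type*} (k : ℕ) (z : ∀ j : Fin (k + 1), Z j) : ∀ j : Fin k, Z j :=
  fun j => z j.castSucc

lemma measurable_restr {Z : ℕ → Type*} [∀ i, MeasurableSpace (Z i)] (k : ℕ) :
    Measurable (restr (Z := Z) k) :=
  measurable_pi_lambda _ fun _ => measurable_pi_apply _

variable (X Y : ℕ → Type*) [∀ i, MeasurableSpace (X i)] [∀ i, MeasurableSpace (Y i)]

/-- A feedback family `(p_0, …, p_n)`: `p_0` is a probability measure on `X_0` (a Markov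
kernel from the one-point space of empty prefixes) and `p_i` is a Markov kernel from
`X_{0,i-1} × Y_{0,i-1}` to `X_i`. -/
structure FeedbackFamily (n : ℕ) where
  p : ∀ i : Fin (n + 1), Kernel ((∀ j : Fin (i : ℕ), X j) × (∀ j : Fin (i : ℕ), Y j)) (X i)
  markov : ∀ i, IsMarkovKernel (p i)

/-- A forward family `(q_0, …, q_n)`: `q_i` is a Markov kernel from
`Y_{0,i-1} × X_{0,i}` to `Y_i`. -/
structure ForwardFamily (n : ℕ) where
  q : ∀ i : Fin (n + 1), Kernel ((∀ j : Fin (i : ℕ), Y j) × (∀ j : Fin ((i : ℕ) + 1), X j)) (Y i)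
  markov : ∀ i, IsMarkovKernel (q i)

variable {X Y} {n : ℕ}

/-- The causally conditioned kernel `←P_{0,k}` from `Y_{0,k-1}` to `X_{0,k}`. -/
noncomputable def back (P : FeedbackFamily X Y n) :
    (k : ℕ) → k ≤ n → Kernel (∀ j : Fin k, Y j) (∀ j : Fin (k + 1), X j)
  | 0, _ =>
      Kernel.map ((P.p ⟨0, Nat.succ_pos n⟩).comap (fun _ => default) measurable_const)
        (fun x0 => (Fin.snoc default x0 : ∀ j : Fin 1, X j))
  | (k + 1), h =>
      Kernel.map
        (((back P k (by omega)).comap (restr k) (measurable_restr k)) ⊗ₖ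
          ((P.p ⟨k + 1, by omega⟩).comap
            (fun t : (∀ j : Fin (k + 1), Y j) × (∀ j : Fin (k + 1), X j) => (t.2, t.1))
            (measurable_snd.prodMk measurable_fst)))
        (fun t : (∀ j : Fin (k + 1), X j) × X (k + 1) =>
          (Fin.snoc t.1 t.2 : ∀ j : Fin (k + 2), X j))

/-- The causally conditioned kernel `→Q_{0,k}` from `X_{0,k}` to `Y_{0,k}`. -/
noncomputable def fwd (Q : ForwardFamily X Y n) :
    (k : ℕ) → k ≤ n → Kernel (∀ j : Fin (k + 1), X j) (∀ j : Fin (k + 1), Y j)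
  | 0, _ =>
      Kernel.map ((Q.q ⟨0, Nat.succ_pos n⟩).comap (fun x => (default, x))
          (measurable_const.prodMk measurable_id))
        (fun y0 => (Fin.snoc default y0 : ∀ j : Fin 1, Y j))
  | (k + 1), h =>
      Kernel.map
        (((fwd Q k (by omega)).comap (restr (k + 1)) (measurable_restr (k + 1))) ⊗ₖ
          ((Q.q ⟨k + 1, by omega⟩).comap
            (fun t : (∀ j : Fin (k + 2), X j) × (∀ j : Fin (k + 1), Y j) => (t.2, t.1))
            (measurable_snd.prodMk measurable_fst)))
        (fun t : (∀ j : Fin (k + 1), Y j) × Y (k + 1) =>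
          (Fin.snoc t.1 t.2 : ∀ j : Fin (k + 2), Y j))

/-- The interleaved joint measure of `←P ⊗ →Q` on prefixes of length `k`. -/
noncomputable def jointAux (P : FeedbackFamily X Y n) (Q : ForwardFamily X Y n) :
    (k : ℕ) → k ≤ n + 1 → Measure ((∀ j : Fin k, X j) × (∀ j : Fin k, Y j))
  | 0, _ => Measure.dirac default
  | (k + 1), h =>
      let μ1 := (jointAux P Q k (by omega)) ⊗ₘ (P.p ⟨k, by omega⟩)
      let μ2 := μ1.map
          (fun t : ((∀ j : Fin k, X j) × (∀ j : Fin k, Y j)) × X k =>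
            (t.1.2, (Fin.snoc t.1.1 t.2 : ∀ j : Fin (k + 1), X j)))
      let μ3 := μ2 ⊗ₘ (Q.q ⟨k, by omega⟩)
      μ3.map
          (fun t : ((∀ j : Fin k, Y j) × (∀ j : Fin (k + 1), X j)) × Y k =>
            (t.1.2, (Fin.snoc t.1.1 t.2 : ∀ j : Fin (k + 1), Y j)))

/-- The joint measure `←P ⊗ →Q` on `X_{0,n} × Y_{0,n}`. -/
noncomputable def joint (P : FeedbackFamily X Y n) (Q : ForwardFamily X Y n) :
    Measure ((∀ j : Fin (n + 1), X j) × (∀ j : Fin (n + 1), Y j)) :=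
  jointAux P Q (n + 1) le_rfl

/-- The marginal `ν_{0,n}` of `←P ⊗ →Q` on `Y_{0,n}`. -/
noncomputable def nu (P : FeedbackFamily X Y n) (Q : ForwardFamily X Y n) :
    Measure (∀ j : Fin (n + 1), Y j) :=
  (joint P Q).map Prod.snd

/-- The measure `←P ⊗ λ` on `X_{0,n} × Y_{0,n}`, i.e. the measure
`←P_{0,n}(dx^n | y^{n-1}) ⊗ λ(dy^n)`. -/
noncomputable def backProd (P : FeedbackFamily X Y n) (lam : Measure (∀ j : Fin (n + 1), Y j)) :
    Measure ((∀ j : Fin (n + 1), X j) × (∀ j : Fin (n + 1), Y j)) :=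
  (lam ⊗ₘ ((back P n le_rfl).comap (restr n) (measurable_restr n))).map Prod.swap

open Classical in
/-- Kullback-Leibler divergence (relative entropy) `D(μ ‖ ν)`, with the convention
`D(μ ‖ ν) = ∞` when absolute continuity fails. -/
noncomputable def KL {Z : Type*} [MeasurableSpace Z] (μ ν : Measure Z) : ℝ≥0∞ :=
  if μ ≪ ν ∧ Integrable (llr μ ν) μ then ENNReal.ofReal (∫ z, llr μ ν z ∂μ) else ⊤

/-- Directed information `I(←P, →Q) = D(←P ⊗ →Q ‖ ←P ⊗ ν_{0,n})`. -/
noncomputable def DI (P : FeedbackFamily X Y n) (Q : ForwardFamily X Y n) : ℝ≥0∞ :=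
  KL (joint P Q) (backProd P (nu P Q))

/-- Weak convergence of a sequence of measures: integrals of every bounded continuous
real-valued function converge. -/
def WeakTendsto {Z : Type*} [MeasurableSpace Z] [TopologicalSpace Z]
    (μ : ℕ → Measure Z) (μ0 : Measure Z) : Prop :=
  ∀ f : BoundedContinuousFunction Z ℝ,
    Tendsto (fun α => ∫ z, f z ∂(μ α)) atTop (nhds (∫ z, f z ∂μ0))

/-- Uniform tightness of a family of measures. -/
def UniformlyTight {Z : Type*} [MeasurableSpace Z] [TopologicalSpace Z]
    (M : Set (Measure Z)) : Prop :=
  ∀ ε : ℝ≥0∞, 0 < ε → ∃ K : Set Z, IsCompact K ∧ ∀ μ ∈ M, 1 - ε ≤ μ K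

/-- The marginal `π_i` of `←P ⊗ →Q` on `X_{0,i} × Y_{0,i-1}`. -/
noncomputable def margin (P : FeedbackFamily X Y n) (Q : ForwardFamily X Y n) (i : Fin (n + 1)) :
    Measure ((∀ j : Fin ((i : ℕ) + 1), X j) × (∀ j : Fin (i : ℕ), Y j)) :=
  (joint P Q).map (fun t =>
    ((fun j : Fin ((i : ℕ) + 1) => t.1 (Fin.castLE i.isLt j)),
     (fun j : Fin (i : ℕ) => t.2 (Fin.castLE i.isLt.le j))))

/-- The iterated product measure of a tuple of kernels `(λ_0, …, λ_n)`,
`λ_i : Y_{0,i-1} → Y_i`, on prefixes of length `k`. -/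
noncomputable def chain {Z : ℕ → Type*} [∀ i, MeasurableSpace (Z i)] {n : ℕ}
    (lam : ∀ i : Fin (n + 1), Kernel (∀ j : Fin (i : ℕ), Z j) (Z i)) :
    (k : ℕ) → k ≤ n + 1 → Measure (∀ j : Fin k, Z j)
  | 0, _ => Measure.dirac default
  | (k + 1), h =>
      ((chain lam k (by omega)) ⊗ₘ (lam ⟨k, by omega⟩)).map
        (fun t : (∀ j : Fin k, Z j) × Z k => (Fin.snoc t.1 t.2 : ∀ j : Fin (k + 1), Z j))

/-- The joint measure `←S ⊗ →R` on `X_{0,n} × Y_{0,n}` determined by a reversed pair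
`(S, R)`; a reversed pair is formally a feedback family and a forward family with the
roles of `X` and `Y` interchanged. -/
noncomputable def revJoint (S : FeedbackFamily Y X n) (R : ForwardFamily Y X n) :
    Measure ((∀ j : Fin (n + 1), X j) × (∀ j : Fin (n + 1), Y j)) :=
  (joint S R).map Prod.swap

/-- `∫ log(dσ/dπ) dμ`, as an extended real number (integral of the positive part minus
integral of the negative part). -/
noncomputable def elogInt {Z : Type*} [MeasurableSpace Z] (σ π μ : Measure Z) : EReal :=
  ((∫⁻ z, ENNReal.ofReal (llr σ π z) ∂μ : ℝ≥0∞) : EReal) -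
    ((∫⁻ z, ENNReal.ofReal (-llr σ π z) ∂μ : ℝ≥0∞) : EReal)

/-- `∫ |log(dμ/dν)| dμ`. -/
noncomputable def absKL {Z : Type*} [MeasurableSpace Z] (μ ν : Measure Z) : ℝ≥0∞ :=
  ∫⁻ z, ENNReal.ofReal |llr μ ν z| ∂μ

section Topology

variable [∀ i, TopologicalSpace (X i)] [∀ i, TopologicalSpace (Y i)]

/-- Condition (CA): each `p_i` is weakly (Feller) continuous in the conditioning
variables `(x^{i-1}, y^{i-1})`. -/
def CondCA (P : FeedbackFamily X Y n) : Prop :=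
  ∀ (i : Fin (n + 1)) (g : BoundedContinuousFunction (X i) ℝ),
    Continuous (fun t : (∀ j : Fin (i : ℕ), X j) × (∀ j : Fin (i : ℕ), Y j) =>
      ∫ x, g x ∂(P.p i t))

/-- Condition (CB): each `q_i` is weakly (Feller) continuous in the conditioning
variables `(x^i, y^{i-1})`. -/
def CondCB (Q : ForwardFamily X Y n) : Prop :=
  ∀ (i : Fin (n + 1)) (g : BoundedContinuousFunction (Y i) ℝ),
    Continuous (fun t : (∀ j : Fin ((i : ℕ) + 1), X j) × (∀ j : Fin (i : ℕ), Y j) =>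
      ∫ y, g y ∂(Q.q i (t.2, t.1)))

end Topology

open InformationTheory

/-!
For probability measures `μ ≪ σ ≪ π`, `log (dσ/dπ) = log (dμ/dπ) - log (dμ/dσ)` holds `μ`-a.e.,
so `∫ log (dσ/dπ) dμ = D(μ ‖ π) - D(μ ‖ σ)` as soon as `D(μ ‖ π) < ∞`: when `D(μ ‖ σ) = ∞` both
sides are `-∞`, because the negative part of `log (dμ/dσ)` is always `μ`-integrable. With
`μ = ←P⊗→Q`, `π = ←P⊗ν_{0,n}` and `σ = ←S⊗→R`, Gibbs' inequality `D(μ ‖ σ) ≥ 0`, with equality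
iff `σ = μ`, gives the bound and its equality case. The bound is attained because every
probability measure on `X_{0,n} × Y_{0,n}` is the joint measure of the reversed pair formed by
its successive conditional laws along `y_0, x_0, y_1, x_1, …`.
-/

section KullbackLeibler

variable {Z : Type*} [MeasurableSpace Z] {μ ν σ π : Measure Z}

lemma KL_eq_klDiv [IsFiniteMeasure μ] [IsFiniteMeasure ν] (h : μ Set.univ = ν Set.univ) :
    KL μ ν = klDiv μ ν := by
  by_cases hac : μ ≪ ν ∧ Integrable (llr μ ν) μ
  · rw [KL, if_pos hac, klDiv_of_ac_of_integrable hac.1 hac.2]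
    simp [measureReal_def, h]
  · rw [KL, if_neg hac, eq_comm, klDiv_eq_top_iff]
    exact fun h1 h2 => hac ⟨h1, h2⟩

lemma integrable_of_lintegral_ofReal_ne_top {f : Z → ℝ} (hf : AEStronglyMeasurable f μ)
    (hpos : ∫⁻ x, ENNReal.ofReal (f x) ∂μ ≠ ∞) (hneg : ∫⁻ x, ENNReal.ofReal (-f x) ∂μ ≠ ∞) :
    Integrable f μ := by
  have hpos' : Integrable (fun x => max (f x) 0) μ :=
    (lintegral_ofReal_ne_top_iff_integrable (by fun_prop)
      (Eventually.of_forall fun _ => le_max_right _ _)).mp (by simpa using hpos)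
  have hneg' : Integrable (fun x => max (-f x) 0) μ :=
    (lintegral_ofReal_ne_top_iff_integrable (by fun_prop)
      (Eventually.of_forall fun _ => le_max_right _ _)).mp (by simpa using hneg)
  exact (hpos'.sub hneg').congr
    (Eventually.of_forall fun x => max_zero_sub_max_neg_zero_eq_self (f x))

lemma llr_ae_eq_llr_add_llr [SigmaFinite μ] [SigmaFinite σ] [SigmaFinite π]
    (hμσ : μ ≪ σ) (hσπ : σ ≪ π) : llr μ π =ᵐ[μ] llr μ σ + llr σ π := by
  filter_upwards [(hμσ.trans hσπ).ae_le (Measure.rnDeriv_mul_rnDeriv hμσ),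
    Measure.rnDeriv_pos hμσ, hμσ.ae_le (Measure.rnDeriv_lt_top μ σ),
    hμσ.ae_le (Measure.rnDeriv_pos hσπ), hμσ.ae_le (hσπ.ae_le (Measure.rnDeriv_lt_top σ π))]
    with x hmul hμσ_pos hμσ_lt hσπ_pos hσπ_lt
  simp only [Pi.add_apply, llr_def, ← hmul, Pi.mul_apply, ENNReal.toReal_mul]
  exact Real.log_mul (ENNReal.toReal_pos hμσ_pos.ne' hμσ_lt.ne).ne'
    (ENNReal.toReal_pos hσπ_pos.ne' hσπ_lt.ne).ne'

lemma lintegral_ofReal_neg_llr_le [SigmaFinite μ] [SigmaFinite ν] (h : μ ≪ ν) :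
    ∫⁻ x, ENNReal.ofReal (-llr μ ν x) ∂μ ≤ ν Set.univ :=
  calc ∫⁻ x, ENNReal.ofReal (-llr μ ν x) ∂μ ≤ ∫⁻ x, ν.rnDeriv μ x ∂μ := by
        refine lintegral_mono_ae ?_
        filter_upwards [exp_neg_llr h, Measure.rnDeriv_lt_top ν μ] with x hexp hlt
        calc ENNReal.ofReal (-llr μ ν x) ≤ ENNReal.ofReal (Real.exp (-llr μ ν x)) :=
              ENNReal.ofReal_le_ofReal (by linarith [Real.add_one_le_exp (-llr μ ν x)])
          _ = ν.rnDeriv μ x := by rw [hexp, ENNReal.ofReal_toReal hlt.ne]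
    _ ≤ ν Set.univ := Measure.lintegral_rnDeriv_le

lemma lintegral_ofReal_ne_top_of_integrable {f : Z → ℝ} (hf : Integrable f μ) :
    ∫⁻ x, ENNReal.ofReal (f x) ∂μ ≠ ∞ := by
  simpa using (lintegral_ofReal_ne_top_iff_integrable (by fun_prop)
      (Eventually.of_forall fun _ => le_max_right _ _)).mpr hf.pos_part

lemma elogInt_eq_integral (h : Integrable (llr σ π) μ) :
    elogInt σ π μ = ∫ x, llr σ π x ∂μ := by
  rw [elogInt, integral_eq_lintegral_pos_part_sub_lintegral_neg_part h, EReal.coe_sub,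
    EReal.coe_ennreal_toReal (lintegral_ofReal_ne_top_of_integrable h),
    EReal.coe_ennreal_toReal
      (lintegral_ofReal_ne_top_of_integrable (f := fun x => -llr σ π x) h.neg)]

lemma coe_ennreal_sub_eq_self_iff {x y : ℝ≥0∞} (hx : x ≠ ∞) : (x : EReal) - y = x ↔ y = 0 := by
  refine ⟨fun h => ?_, fun h => by rw [h, EReal.coe_ennreal_zero, sub_zero]⟩
  rcases eq_or_ne y ∞ with rfl | hy
  · exact absurd h.symm (by simp [EReal.sub_top])
  · rw [← EReal.coe_ennreal_toReal hx, ← EReal.coe_ennreal_toReal hy, ← EReal.coe_sub,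
      EReal.coe_eq_coe_iff, sub_eq_self, ENNReal.toReal_eq_zero_iff] at h
    exact h.resolve_right hy

lemma lintegral_ofReal_llr_eq_top [IsFiniteMeasure μ] [IsFiniteMeasure ν] (h : μ ≪ ν)
    (hint : ¬ Integrable (llr μ ν) μ) : ∫⁻ x, ENNReal.ofReal (llr μ ν x) ∂μ = ∞ := by
  by_contra hne
  exact hint (integrable_of_lintegral_ofReal_ne_top (measurable_llr μ ν).aestronglyMeasurable
    hne ((lintegral_ofReal_neg_llr_le h).trans_lt (measure_lt_top ν _)).ne)

variable [IsProbabilityMeasure μ] [IsProbabilityMeasure σ] [IsProbabilityMeasure π]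

theorem elogInt_eq_klDiv_sub_klDiv (hσπ : σ ≪ π) (hμσ : μ ≪ σ) (hμπ : klDiv μ π ≠ ∞) :
    elogInt σ π μ = (klDiv μ π : EReal) - klDiv μ σ := by
  have hint : Integrable (llr μ π) μ := (klDiv_ne_top_iff.mp hμπ).2
  have hsplit : llr σ π =ᵐ[μ] llr μ π - llr μ σ := by
    filter_upwards [llr_ae_eq_llr_add_llr hμσ hσπ] with x hx
    simp only [hx, Pi.add_apply, Pi.sub_apply, add_sub_cancel_left]
  by_cases hμσ_int : Integrable (llr μ σ) μ
  · rw [elogInt_eq_integral ((hint.sub hμσ_int).congr hsplit.symm), integral_congr_ae hsplit,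
      Pi.sub_def, integral_sub hint hμσ_int, EReal.coe_sub,
      ← toReal_klDiv_of_measure_eq (hμσ.trans hσπ) (by simp),
      ← toReal_klDiv_of_measure_eq hμσ (by simp), EReal.coe_ennreal_toReal hμπ,
      EReal.coe_ennreal_toReal (klDiv_ne_top hμσ hμσ_int)]
  · suffices ∫⁻ x, ENNReal.ofReal (-llr σ π x) ∂μ = ∞ by
      rw [elogInt, this, klDiv_of_not_integrable hμσ_int, EReal.coe_ennreal_top, EReal.sub_top,
        EReal.sub_top]
    have hle : ∀ᵐ x ∂μ, ENNReal.ofReal (llr μ σ x)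
        ≤ ENNReal.ofReal (-llr σ π x) + ENNReal.ofReal (llr μ π x) := by
      filter_upwards [hsplit] with x hx
      rw [hx, Pi.sub_apply, neg_sub]
      exact (ENNReal.ofReal_le_ofReal (by linarith)).trans ENNReal.ofReal_add_le
    have htop := (lintegral_ofReal_llr_eq_top hμσ hμσ_int).symm.le.trans
      ((lintegral_mono_ae hle).trans_eq (lintegral_add_right' _
        (measurable_llr μ π).ennreal_ofReal.aemeasurable))
    exact (ENNReal.add_eq_top.mp (top_le_iff.mp htop)).resolve_right
      (lintegral_ofReal_ne_top_of_integrable hint)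

theorem elogInt_le_klDiv (hσπ : σ ≪ π) (hμσ : μ ≪ σ) (hμπ : klDiv μ π ≠ ∞) :
    elogInt σ π μ ≤ klDiv μ π := by
  rw [elogInt_eq_klDiv_sub_klDiv hσπ hμσ hμπ]
  exact EReal.sub_le_of_le_add (le_add_of_nonneg_right (EReal.coe_ennreal_nonneg _))

theorem elogInt_eq_klDiv_iff (hσπ : σ ≪ π) (hμσ : μ ≪ σ) (hμπ : klDiv μ π ≠ ∞) :
    elogInt σ π μ = klDiv μ π ↔ σ = μ := by
  rw [elogInt_eq_klDiv_sub_klDiv hσπ hμσ hμπ, coe_ennreal_sub_eq_self_iff hμπ, eq_comm (a := σ),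
    klDiv_eq_zero_iff]

end KullbackLeibler

lemma measurable_take {Z : ℕ → Type*} [∀ i, MeasurableSpace (Z i)] {m k : ℕ} (h : k ≤ m) :
    Measurable (Fin.take k h : (∀ j : Fin m, Z j) → ∀ j : Fin k, Z j) :=
  measurable_pi_lambda _ fun _ => measurable_pi_apply _

lemma measurable_snoc_swap {Z : ℕ → Type*} [∀ i, MeasurableSpace (Z i)] {B : Type*}
    [MeasurableSpace B] (k : ℕ) :
    Measurable (fun t : ((∀ j : Fin k, Z j) × B) × Z k =>
      (t.1.2, (Fin.snoc t.1.1 t.2 : ∀ j : Fin (k + 1), Z j))) :=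
  measurable_fst.snd.prodMk ((measurable_finSnoc k).comp (measurable_fst.fst.prodMk measurable_snd))

section Probability

variable {X Y : ℕ → Type*} [∀ i, MeasurableSpace (X i)] [∀ i, MeasurableSpace (Y i)] {n : ℕ}

lemma isProbabilityMeasure_jointAux (P : FeedbackFamily X Y n) (Q : ForwardFamily X Y n) :
    ∀ (k : ℕ) (hk : k ≤ n + 1), IsProbabilityMeasure (jointAux P Q k hk)
  | 0, _ => by rw [jointAux]; infer_instance
  | k + 1, hk => by
      have := isProbabilityMeasure_jointAux P Q k (by omega)
      have := P.markov ⟨k, hk⟩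
      have := Q.markov ⟨k, hk⟩
      have := Measure.isProbabilityMeasure_map (μ := jointAux P Q k (by omega) ⊗ₘ P.p ⟨k, hk⟩)
        (measurable_snoc_swap k).aemeasurable
      rw [jointAux]
      exact Measure.isProbabilityMeasure_map (measurable_snoc_swap k).aemeasurable

instance (P : FeedbackFamily X Y n) (Q : ForwardFamily X Y n) :
    IsProbabilityMeasure (joint P Q) :=
  isProbabilityMeasure_jointAux P Q (n + 1) le_rfl

instance (P : FeedbackFamily X Y n) (Q : ForwardFamily X Y n) :
    IsProbabilityMeasure (nu P Q) :=
  Measure.isProbabilityMeasure_map measurable_snd.aemeasurable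

instance (S : FeedbackFamily Y X n) (R : ForwardFamily Y X n) :
    IsProbabilityMeasure (revJoint S R) :=
  Measure.isProbabilityMeasure_map measurable_swap.aemeasurable

lemma isMarkovKernel_back (P : FeedbackFamily X Y n) :
    ∀ (k : ℕ) (hk : k ≤ n), IsMarkovKernel (back P k hk)
  | 0, _ => by
      have := P.markov ⟨0, Nat.succ_pos n⟩
      rw [back]
      exact Kernel.IsMarkovKernel.map _
        ((measurable_finSnoc 0).comp (measurable_const.prodMk measurable_id))
  | k + 1, hk => by
      have := isMarkovKernel_back P k (by omega)
      have := P.markov ⟨k + 1, by omega⟩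
      rw [back]
      exact Kernel.IsMarkovKernel.map _ (measurable_finSnoc (k + 1))

instance (P : FeedbackFamily X Y n) (lam : Measure (∀ j : Fin (n + 1), Y j))
    [IsProbabilityMeasure lam] : IsProbabilityMeasure (backProd P lam) :=
  have := isMarkovKernel_back P n le_rfl
  Measure.isProbabilityMeasure_map measurable_swap.aemeasurable

lemma nonempty_X_of_isProbabilityMeasure
    (μ : Measure ((∀ j : Fin (n + 1), X j) × (∀ j : Fin (n + 1), Y j))) [IsProbabilityMeasure μ]
    (i : Fin (n + 1)) : Nonempty (X i) :=
  let ⟨t⟩ := μ.nonempty_of_neZero; ⟨t.1 i⟩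

lemma nonempty_Y_of_isProbabilityMeasure
    (μ : Measure ((∀ j : Fin (n + 1), X j) × (∀ j : Fin (n + 1), Y j))) [IsProbabilityMeasure μ]
    (i : Fin (n + 1)) : Nonempty (Y i) :=
  let ⟨t⟩ := μ.nonempty_of_neZero; ⟨t.2 i⟩

end Probability

section Disintegration

variable {X Y : ℕ → Type*} {n : ℕ} [∀ i, MeasurableSpace (X i)] [∀ i, MeasurableSpace (Y i)]
  (μ : Measure ((∀ j : Fin (n + 1), X j) × (∀ j : Fin (n + 1), Y j)))

def takeSwap (k : ℕ) (hk : k ≤ n + 1)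
    (t : (∀ j : Fin (n + 1), X j) × (∀ j : Fin (n + 1), Y j)) :
    (∀ j : Fin k, Y j) × (∀ j : Fin k, X j) :=
  (Fin.take k hk t.2, Fin.take k hk t.1)

lemma measurable_takeSwap (k : ℕ) (hk : k ≤ n + 1) :
    Measurable (takeSwap (X := X) (Y := Y) k hk) :=
  ((measurable_take hk).comp measurable_snd).prodMk ((measurable_take hk).comp measurable_fst)

lemma measurable_takeSwap_prodMk_apply (k : ℕ) (hk : k < n + 1) :
    Measurable fun t : (∀ j : Fin (n + 1), X j) × (∀ j : Fin (n + 1), Y j) =>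
      (takeSwap k hk.le t, t.2 ⟨k, hk⟩) :=
  (measurable_takeSwap _ _).prodMk ((measurable_pi_apply _).comp measurable_snd)

lemma measurable_take_prodMk_apply (k : ℕ) (hk : k < n + 1) :
    Measurable fun t : (∀ j : Fin (n + 1), X j) × (∀ j : Fin (n + 1), Y j) =>
      ((Fin.take k hk.le t.1, Fin.take (k + 1) hk t.2), t.1 ⟨k, hk⟩) :=
  (((measurable_take _).comp measurable_fst).prodMk
    ((measurable_take _).comp measurable_snd)).prodMk ((measurable_pi_apply _).comp measurable_fst)

noncomputable def lawY (k : ℕ) (hk : k < n + 1) :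
    Measure (((∀ j : Fin k, Y j) × (∀ j : Fin k, X j)) × Y k) :=
  μ.map fun t => (takeSwap k hk.le t, t.2 ⟨k, hk⟩)

noncomputable def lawX (k : ℕ) (hk : k < n + 1) :
    Measure (((∀ j : Fin k, X j) × (∀ j : Fin (k + 1), Y j)) × X k) :=
  μ.map fun t => ((Fin.take k hk.le t.1, Fin.take (k + 1) hk t.2), t.1 ⟨k, hk⟩)

instance [IsProbabilityMeasure μ] (k : ℕ) (hk : k < n + 1) :
    IsProbabilityMeasure (lawY μ k hk) :=
  Measure.isProbabilityMeasure_map (measurable_takeSwap_prodMk_apply k hk).aemeasurable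

instance [IsProbabilityMeasure μ] (k : ℕ) (hk : k < n + 1) :
    IsProbabilityMeasure (lawX μ k hk) :=
  Measure.isProbabilityMeasure_map (measurable_take_prodMk_apply k hk).aemeasurable

lemma lawY_fst (k : ℕ) (hk : k < n + 1) : (lawY μ k hk).fst = μ.map (takeSwap k hk.le) :=
  Measure.map_map measurable_fst (measurable_takeSwap_prodMk_apply k hk)

lemma lawY_map_snoc (k : ℕ) (hk : k < n + 1) :
    (lawY μ k hk).map
        (fun t : ((∀ j : Fin k, Y j) × (∀ j : Fin k, X j)) × Y k =>
          (t.1.2, (Fin.snoc t.1.1 t.2 : ∀ j : Fin (k + 1), Y j))) = (lawX μ k hk).fst := by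
  rw [lawY, lawX,
    Measure.map_map (measurable_snoc_swap k) (measurable_takeSwap_prodMk_apply k hk), Measure.fst,
    Measure.map_map measurable_fst (measurable_take_prodMk_apply k hk)]
  congr 1
  funext t
  exact Prod.ext rfl (Fin.take_succ_eq_snoc k hk t.2).symm

lemma lawX_map_snoc (k : ℕ) (hk : k < n + 1) :
    (lawX μ k hk).map
        (fun t : ((∀ j : Fin k, X j) × (∀ j : Fin (k + 1), Y j)) × X k =>
          (t.1.2, (Fin.snoc t.1.1 t.2 : ∀ j : Fin (k + 1), X j))) =
      μ.map (takeSwap (k + 1) hk) := by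
  rw [lawX, Measure.map_map (measurable_snoc_swap (Z := X) (B := ∀ j : Fin (k + 1), Y j) k)
    (measurable_take_prodMk_apply k hk)]
  congr 1
  funext t
  exact Prod.ext rfl (Fin.take_succ_eq_snoc k hk t.1).symm

variable [∀ i, StandardBorelSpace (X i)] [∀ i, StandardBorelSpace (Y i)] [IsProbabilityMeasure μ]

noncomputable def disintS : FeedbackFamily Y X n where
  p i := have := nonempty_Y_of_isProbabilityMeasure μ i; (lawY μ i i.isLt).condKernel
  markov _ := by infer_instance

noncomputable def disintR : ForwardFamily Y X n where
  q i := have := nonempty_X_of_isProbabilityMeasure μ i; (lawX μ i i.isLt).condKernel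
  markov _ := by infer_instance

lemma jointAux_disint_eq : ∀ (k : ℕ) (hk : k ≤ n + 1),
    jointAux (disintS μ) (disintR μ) k hk = μ.map (takeSwap k hk)
  | 0, hk => by
      rw [jointAux, Subsingleton.elim (takeSwap 0 hk) fun _ => default, Measure.map_const,
        measure_univ, one_smul]
  | k + 1, hk => by
      have := nonempty_X_of_isProbabilityMeasure μ ⟨k, hk⟩
      have := nonempty_Y_of_isProbabilityMeasure μ ⟨k, hk⟩
      have hS : (disintS μ).p ⟨k, hk⟩ = (lawY μ k hk).condKernel := rfl
      have hR : (disintR μ).q ⟨k, hk⟩ = (lawX μ k hk).condKernel := rfl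
      rw [jointAux, jointAux_disint_eq k, ← lawY_fst μ k hk, hS, Measure.disintegrate _ _,
        lawY_map_snoc, hR, Measure.disintegrate _ _, lawX_map_snoc]

theorem revJoint_disint : revJoint (disintS μ) (disintR μ) = μ := by
  rw [revJoint, joint, jointAux_disint_eq,
    Measure.map_map measurable_swap (measurable_takeSwap _ _)]
  exact Measure.map_id

end Disintegration

section Statements

variable {X Y : ℕ → Type*} {n : ℕ}
  [∀ i, TopologicalSpace (X i)] [∀ i, MeasurableSpace (X i)] [∀ i, BorelSpace (X i)]
  [∀ i, PolishSpace (X i)]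
  [∀ i, TopologicalSpace (Y i)] [∀ i, MeasurableSpace (Y i)] [∀ i, BorelSpace (Y i)]
  [∀ i, PolishSpace (Y i)]

/-- Variational equality (maximization) over reversed pairs: for every
reversed pair `(S, R)` with `←S⊗→R ≪ Π := ←P⊗ν` and `←P⊗→Q ≪ ←S⊗→R`, the integral
`∫ log(d(←S⊗→R)/dΠ) d(←P⊗→Q)` is at most `I(←P,→Q)`, with equality iff
`←S⊗→R = ←P⊗→Q`; consequently `I(←P,→Q)` is the (attained) supremum over all such
reversed pairs. -/
theorem directedInfo_variational_max
    (P : FeedbackFamily X Y n) (Q : ForwardFamily X Y n) (hfin : DI P Q < ⊤) :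
    (∀ (S : FeedbackFamily Y X n) (R : ForwardFamily Y X n),
      revJoint S R ≪ backProd P (nu P Q) → joint P Q ≪ revJoint S R →
        elogInt (revJoint S R) (backProd P (nu P Q)) (joint P Q) ≤ (DI P Q : EReal) ∧
          (elogInt (revJoint S R) (backProd P (nu P Q)) (joint P Q) = (DI P Q : EReal) ↔
            revJoint S R = joint P Q)) ∧
    ((DI P Q : EReal) = ⨆ (S : FeedbackFamily Y X n) (R : ForwardFamily Y X n)
        (_ : revJoint S R ≪ backProd P (nu P Q)) (_ : joint P Q ≪ revJoint S R),
        elogInt (revJoint S R) (backProd P (nu P Q)) (joint P Q)) ∧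
    ∃ (S : FeedbackFamily Y X n) (R : ForwardFamily Y X n),
      revJoint S R ≪ backProd P (nu P Q) ∧ joint P Q ≪ revJoint S R ∧
        elogInt (revJoint S R) (backProd P (nu P Q)) (joint P Q) = (DI P Q : EReal) := by
  have hDI : DI P Q = klDiv (joint P Q) (backProd P (nu P Q)) := KL_eq_klDiv (by simp)
  rw [hDI] at hfin ⊢
  have bound (S : FeedbackFamily Y X n) (R : ForwardFamily Y X n)
      (hσπ : revJoint S R ≪ backProd P (nu P Q)) (hμσ : joint P Q ≪ revJoint S R) :=
    And.intro (elogInt_le_klDiv hσπ hμσ hfin.ne) (elogInt_eq_klDiv_iff hσπ hμσ hfin.ne)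
  have hdisint := revJoint_disint (joint P Q)
  have hσπ : revJoint (disintS (joint P Q)) (disintR (joint P Q)) ≪ backProd P (nu P Q) := by
    rw [hdisint]; exact (klDiv_ne_top_iff.mp hfin.ne).1
  have hμσ : joint P Q ≪ revJoint (disintS (joint P Q)) (disintR (joint P Q)) := by
    rw [hdisint]
  have hattained := (bound _ _ hσπ hμσ).2.mpr hdisint
  refine ⟨bound, le_antisymm ?_ ?_, _, _, hσπ, hμσ, hattained⟩
  · exact le_iSup₂_of_le _ _ (le_iSup₂_of_le hσπ hμσ hattained.ge)
  · exact iSup₂_le fun S R => iSup₂_le fun hσπ hμσ => (bound S R hσπ hμσ).1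

end Statements

end PaperDI
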